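/- arXiv:2103.00083 — 9 statements merged into one kernel-verified Lean document; each statement's English description precedes it below -/
import Mathlib

section
/- Let 0 ≤ τ₁ < τ₂ ≤ 1 and let q₁, q₂, y ∈ ℝ with q₁ > q₂. Then swapping the two quantile values strictly decreases the total pinball loss: ψ_{τ₁}(y − q₂) + ψ_{τ₂}(y − q₁) < ψ_{τ₁}(y − q₁) + ψ_{τ₂}(y − q₂). -/
/-- The pinball (tilted-ℓ₁) loss at quantile level `τ`. -/
noncomputable def pinball (τ z : ℝ) : ℝ := if 0 ≤ z then τ * z else (1 - τ) * (-z)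

/-!
Since `pinball τ z = τ * z + max (-z) 0`, the difference of two pinball losses at the same
point is linear: `pinball τ₂ z - pinball τ₁ z = (τ₂ - τ₁) * z`. Swapping `q₁` and `q₂` thus
changes the total loss by `(τ₂ - τ₁) * (q₂ - q₁) < 0`, whatever the position of `y`.
-/

theorem pinball_eq_mul_add_max (τ z : ℝ) : pinball τ z = τ * z + max (-z) 0 := by
  unfold pinball
  split_ifs with hz
  · rw [max_eq_right (by linarith)]
    ring
  · rw [max_eq_left (by linarith)]
    ring

theorem pinball_sub_pinball (τ σ z : ℝ) : pinball τ z - pinball σ z = (τ - σ) * z := by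
  rw [pinball_eq_mul_add_max, pinball_eq_mul_add_max]
  ring

theorem pinball_swap_strict_general (τ₁ τ₂ q₁ q₂ y : ℝ)
    (hτ : τ₁ < τ₂) (hq : q₂ < q₁) :
    pinball τ₁ (y - q₂) + pinball τ₂ (y - q₁) <
      pinball τ₁ (y - q₁) + pinball τ₂ (y - q₂) := by
  have h₁ := pinball_sub_pinball τ₂ τ₁ (y - q₁)
  have h₂ := pinball_sub_pinball τ₂ τ₁ (y - q₂)
  have hgap : 0 < (τ₂ - τ₁) * (q₁ - q₂) := mul_pos (sub_pos.2 hτ) (sub_pos.2 hq)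
  linarith

/-- Swapping two crossed quantile values strictly decreases the total pinball loss. -/
theorem pinball_swap_strict (τ₁ τ₂ q₁ q₂ y : ℝ)
    (hτ₁ : 0 ≤ τ₁) (hτ : τ₁ < τ₂) (hτ₂ : τ₂ ≤ 1) (hq : q₂ < q₁) :
    pinball τ₁ (y - q₂) + pinball τ₂ (y - q₁) <
      pinball τ₁ (y - q₁) + pinball τ₂ (y - q₂) :=
  pinball_swap_strict_general τ₁ τ₂ q₁ q₂ y hτ hq
end

section
/- Let m ≥ 1, let 0 ≤ τ₁ < τ₂ < ⋯ < τ_m ≤ 1 be strictly increasing quantile levels, let v ∈ ℝ^m with sort(v) ≠ v, and let y ∈ ℝ. Then sorting strictly improves the total pinball loss: ∑_{i=1}^m ψ_{τ_i}(y − sort(v)_i) < ∑_{i=1}^m ψ_{τ_i}(y − v_i). -/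
theorem pinball_sub_eq (τ y a : ℝ) : pinball τ (y - a) = τ * (y - a) + max (a - y) 0 := by
  unfold pinball
  split_ifs with h
  · rw [max_eq_right (by linarith)]; ring
  · rw [max_eq_left (by linarith)]; ring

theorem sum_pinball_comp_perm_sub_sum_pinball {ι : Type*} [Fintype ι] (τ v : ι → ℝ)
    (σ : Equiv.Perm ι) (y : ℝ) :
    ∑ i, pinball (τ i) (y - v (σ i)) - ∑ i, pinball (τ i) (y - v i) =
      ∑ i, τ i * v i - ∑ i, τ i * v (σ i) := by
  have hpos : ∑ i, max (v (σ i) - y) 0 = ∑ i, max (v i - y) 0 :=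
    Equiv.sum_comp σ fun i ↦ max (v i - y) 0
  simp only [pinball_sub_eq, Finset.sum_add_distrib, mul_sub, Finset.sum_sub_distrib, hpos]
  ring

theorem Tuple.sum_mul_lt_sum_mul_comp_sort {α : Type*} [Semiring α] [LinearOrder α]
    [IsStrictOrderedRing α] [ExistsAddOfLE α] {n : ℕ} {τ v : Fin n → α} (hτ : StrictMono τ)
    (hv : v ∘ Tuple.sort v ≠ v) :
    ∑ i, τ i * v i < ∑ i, τ i * v (Tuple.sort v i) := by
  have hsorted : Monovary τ (v ∘ Tuple.sort v) :=
    hτ.monotone.monovary (Tuple.monotone_sort v)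
  have hunsorted : ¬Monovary τ v := by
    obtain ⟨i, j, hij, hji⟩ := Tuple.antitone_pair_of_not_sorted hv.symm
    exact fun h ↦ (hτ hij).not_ge (h hji)
  have hrestore : (v ∘ Tuple.sort v) ∘ ⇑(Tuple.sort v)⁻¹ = v := by
    ext i; simp
  simpa [hrestore] using
    (hsorted.sum_mul_comp_perm_lt_sum_mul_iff (σ := (Tuple.sort v)⁻¹)).mpr (by rwa [hrestore])

theorem pinball_sort_lt_general (m : ℕ) (τ : Fin m → ℝ) (hτmono : StrictMono τ)
    (v : Fin m → ℝ)
    (hv : v ∘ Tuple.sort v ≠ v) (y : ℝ) :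
    ∑ i, pinball (τ i) (y - (v ∘ Tuple.sort v) i) <
      ∑ i, pinball (τ i) (y - v i) := by
  have hdiff := sum_pinball_comp_perm_sub_sum_pinball τ v (Tuple.sort v) y
  have hrearr := Tuple.sum_mul_lt_sum_mul_comp_sort hτmono hv
  simp only [Function.comp_apply]
  linarith

/-- If the quantile levels are strictly increasing and the vector is not already sorted,
sorting strictly improves the total pinball loss. -/
theorem pinball_sort_lt (m : ℕ) (hm : 1 ≤ m) (τ : Fin m → ℝ) (hτmono : StrictMono τ)
    (hτ0 : ∀ i, 0 ≤ τ i) (hτ1 : ∀ i, τ i ≤ 1) (v : Fin m → ℝ)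
    (hv : v ∘ Tuple.sort v ≠ v) (y : ℝ) :
    ∑ i, pinball (τ i) (y - (v ∘ Tuple.sort v) i) <
      ∑ i, pinball (τ i) (y - v i) :=
  pinball_sort_lt_general m τ hτmono v hv y
end

section
/- Let m ≥ 1, let 0 ≤ τ₁ ≤ τ₂ ≤ ⋯ ≤ τ_m ≤ 1 be quantile levels, let v ∈ ℝ^m, and let u ∈ K_m be the isotonic projection of v, i.e., u minimizes the Euclidean norm ‖v − u‖₂ over all u ∈ K_m. Then for every y ∈ ℝ, ∑_{i=1}^m ψ_{τ_i}(y − u_i) ≤ ∑_{i=1}^m ψ_{τ_i}(y − v_i). -/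
open Finset Filter Topology

lemma pinball_sub_add_mul_le (τ y a b : ℝ) :
    pinball τ (y - a) + ((if y < a then 1 else 0) - τ) * (b - a) ≤ pinball τ (y - b) := by
  unfold pinball
  split_ifs <;> nlinarith

section Projection

variable {ι : Type*} [Fintype ι] {v u w : ι → ℝ}

lemma sum_sub_mul_sub_nonpos_of_forall_sqrt_le {K : Set (ι → ℝ)} (hK : Convex ℝ K) (hu : u ∈ K)
    (hmin : ∀ w ∈ K, √(∑ i, (v i - u i) ^ 2) ≤ √(∑ i, (v i - w i) ^ 2)) (hw : w ∈ K) :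
    ∑ i, (v i - u i) * (w i - u i) ≤ 0 := by
  let K₂ : Set (EuclideanSpace ℝ ι) := {x | x.ofLp ∈ K}
  have hK₂ : Convex ℝ K₂ := fun x hx z hz a b ha hb hab => hK hx hz ha hb hab
  have huK₂ : WithLp.toLp 2 u ∈ K₂ := hu
  have hnorm (x : EuclideanSpace ℝ ι) :
      ‖WithLp.toLp 2 v - x‖ = √(∑ i, (v i - x i) ^ 2) := by
    simp [EuclideanSpace.norm_eq]
  have hinf : ‖WithLp.toLp 2 v - WithLp.toLp 2 u‖ = ⨅ x : K₂, ‖WithLp.toLp 2 v - x‖ := by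
    have : Nonempty K₂ := ⟨⟨_, huK₂⟩⟩
    have hbdd : BddBelow (Set.range fun x : K₂ => ‖WithLp.toLp 2 v - x‖) :=
      ⟨0, by rintro _ ⟨x, rfl⟩; exact norm_nonneg _⟩
    refine le_antisymm (le_ciInf fun x => ?_) (ciInf_le hbdd ⟨_, huK₂⟩)
    rw [hnorm, hnorm]
    exact hmin _ x.2
  have := (norm_eq_iInf_iff_real_inner_le_zero hK₂ huK₂).1 hinf (WithLp.toLp 2 w) hw
  simpa [PiLp.inner_apply, mul_comm] using this

end Projection

section Isotonic

variable {ι : Type*} [Preorder ι] {v u w : ι → ℝ}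

lemma convex_setOf_monotone : Convex ℝ {f : ι → ℝ | Monotone f} :=
  fun _ hf _ hg _ _ ha hb _ => (hf.const_mul ha).add (hg.const_mul hb)

-- `𝟙[y < u]` jumps only where `u` jumps across `y`, by at least the positive gap `u j - y`.
lemma Monotone.exists_pos_monotone_sub_mul_ite_lt [Finite ι] (hu : Monotone u) (y : ℝ) :
    ∃ t > 0, Monotone fun i => u i - t * if y < u i then 1 else 0 := by
  have hsmall : ∀ᶠ t in 𝓝[>] (0 : ℝ), 0 < t ∧ ∀ i, y < u i → t ≤ u i - y := by
    refine eventually_mem_nhdsWithin.and (eventually_all.2 fun i => ?_)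
    by_cases hi : y < u i
    · filter_upwards [nhdsWithin_le_nhds (eventually_le_nhds (sub_pos.2 hi))] with t ht
      exact fun _ => ht
    · exact Eventually.of_forall fun _ h => absurd h hi
  obtain ⟨t, ht, hgap⟩ := hsmall.exists
  refine ⟨t, ht, fun i j hij => ?_⟩
  have := hu hij
  dsimp only
  split_ifs with hi hj hj
  · linarith
  · linarith
  · linarith [hgap j hj]
  · linarith

variable [Fintype ι]

lemma sum_sub_mul_nonpos_of_isotonicProj (hu : Monotone u)
    (hproj : ∀ w : ι → ℝ, Monotone w → √(∑ i, (v i - u i) ^ 2) ≤ √(∑ i, (v i - w i) ^ 2))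
    (hw : Monotone w) :
    ∑ i, (v i - u i) * w i ≤ 0 := by
  simpa using sum_sub_mul_sub_nonpos_of_forall_sqrt_le convex_setOf_monotone hu hproj
    (show Monotone (u + w) from hu.add hw)

lemma sum_sub_mul_ite_lt_nonneg_of_isotonicProj (hu : Monotone u)
    (hproj : ∀ w : ι → ℝ, Monotone w → √(∑ i, (v i - u i) ^ 2) ≤ √(∑ i, (v i - w i) ^ 2))
    (y : ℝ) :
    0 ≤ ∑ i, (v i - u i) * if y < u i then 1 else 0 := by
  obtain ⟨t, ht, hmono⟩ := hu.exists_pos_monotone_sub_mul_ite_lt y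
  have := sum_sub_mul_sub_nonpos_of_forall_sqrt_le convex_setOf_monotone hu hproj hmono
  simp only [sub_sub_cancel_left, mul_neg, mul_left_comm _ t, ← mul_sum, sum_neg_distrib] at this
  nlinarith

end Isotonic

theorem pinball_isotonicProj_le_general (m : ℕ) (τ : Fin m → ℝ) (hτmono : Monotone τ)
    (v u : Fin m → ℝ)
    (hu : Monotone u)
    (hproj : ∀ w : Fin m → ℝ, Monotone w →
      Real.sqrt (∑ i, (v i - u i) ^ 2) ≤ Real.sqrt (∑ i, (v i - w i) ^ 2))
    (y : ℝ) :
    ∑ i, pinball (τ i) (y - u i) ≤ ∑ i, pinball (τ i) (y - v i) := by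
  have hsubgrad : 0 ≤ ∑ i, ((if y < u i then 1 else 0) - τ i) * (v i - u i) := by
    have hτ := sum_sub_mul_nonpos_of_isotonicProj hu hproj hτmono
    have hind := sum_sub_mul_ite_lt_nonneg_of_isotonicProj hu hproj y
    have hsplit : ∑ i, ((if y < u i then 1 else 0) - τ i) * (v i - u i)
        = ∑ i, (v i - u i) * (if y < u i then 1 else 0) - ∑ i, (v i - u i) * τ i := by
      rw [← sum_sub_distrib]
      exact sum_congr rfl fun i _ => by ring
    linarith
  calc ∑ i, pinball (τ i) (y - u i)
      ≤ ∑ i, (pinball (τ i) (y - u i) + ((if y < u i then 1 else 0) - τ i) * (v i - u i)) := by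
        rw [sum_add_distrib]
        exact le_add_of_nonneg_right hsubgrad
    _ ≤ ∑ i, pinball (τ i) (y - v i) :=
        sum_le_sum fun i _ => pinball_sub_add_mul_le (τ i) y (u i) (v i)

/-- Isotonic projection (the Euclidean-norm projection onto the cone of nondecreasing
vectors) can only improve the total pinball loss. -/
theorem pinball_isotonicProj_le (m : ℕ) (hm : 1 ≤ m) (τ : Fin m → ℝ) (hτmono : Monotone τ)
    (hτ0 : ∀ i, 0 ≤ τ i) (hτ1 : ∀ i, τ i ≤ 1) (v u : Fin m → ℝ)
    (hu : Monotone u)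
    (hproj : ∀ w : Fin m → ℝ, Monotone w →
      Real.sqrt (∑ i, (v i - u i) ^ 2) ≤ Real.sqrt (∑ i, (v i - w i) ^ 2))
    (y : ℝ) :
    ∑ i, pinball (τ i) (y - u i) ≤ ∑ i, pinball (τ i) (y - v i) :=
  pinball_isotonicProj_le_general m τ hτmono v u hu hproj y
end

section
/- Let k, ℓ ≥ 1, let 0 ≤ τ₁ ≤ τ₂ ≤ ⋯ ≤ τ_{k+ℓ} ≤ 1 be quantile levels, let a > b be real numbers, and let c = (k·a + ℓ·b)/(k + ℓ) be their weighted mean. Then for every y ∈ ℝ, pooling the violating blocks can only improve the total pinball loss: ∑_{i=1}^{k+ℓ} ψ_{τ_i}(y − c) ≤ ∑_{i=1}^{k} ψ_{τ_i}(y − a) + ∑_{i=k+1}^{k+ℓ} ψ_{τ_i}(y − b). -/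
/-!
Writing `ψ_τ(z) = τ z + z⁻`, the loss splits into a part linear in `z` and the convex part `z⁻`,
which does not depend on `τ`. The convex part improves under pooling by Jensen's inequality.
The change of the linear part is `(a - b) (l S₁ - k S₂) / (k + l)`, where `S₁`, `S₂` are the sums
of the levels over the two blocks; it is `≤ 0` because, `τ` being monotone, every level of the
first block is at most every level of the second.
-/

open Finset

lemma pinball_eq_mul_add_negPart (τ z : ℝ) : pinball τ z = τ * z + z⁻ := by
  unfold pinball
  split_ifs with h
  · rw [negPart_eq_zero.2 h, add_zero]
  · rw [negPart_eq_neg.2 (not_le.1 h).le]; ring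

lemma sum_pinball_eq {ι : Type*} [Fintype ι] (τ : ι → ℝ) (z : ℝ) :
    ∑ i, pinball (τ i) z = (∑ i, τ i) * z + Fintype.card ι * z⁻ := by
  simp only [pinball_eq_mul_add_negPart, sum_add_distrib, sum_const, card_univ, nsmul_eq_mul,
    sum_mul]

lemma card_nsmul_sum_le_card_nsmul_sum {ι κ α : Type*} [AddCommMonoid α] [PartialOrder α]
    [IsOrderedAddMonoid α] {s : Finset ι} {t : Finset κ} {f : ι → α} {g : κ → α}
    (h : ∀ i ∈ s, ∀ j ∈ t, f i ≤ g j) :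
    #t • ∑ i ∈ s, f i ≤ #s • ∑ j ∈ t, g j :=
  calc #t • ∑ i ∈ s, f i = ∑ i ∈ s, ∑ j ∈ t, f i := by simp [smul_sum]
    _ ≤ ∑ i ∈ s, ∑ j ∈ t, g j := sum_le_sum fun i hi => sum_le_sum fun j hj => h i hi j hj
    _ = #s • ∑ j ∈ t, g j := by rw [sum_comm]; simp [smul_sum]

lemma Monotone.card_nsmul_sum_castAdd_le {α : Type*} [AddCommMonoid α] [PartialOrder α]
    [IsOrderedAddMonoid α] {k l : ℕ} {τ : Fin (k + l) → α} (hτ : Monotone τ) :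
    l • ∑ i : Fin k, τ (Fin.castAdd l i) ≤ k • ∑ j : Fin l, τ (Fin.natAdd k j) := by
  simpa using card_nsmul_sum_le_card_nsmul_sum (s := univ) (t := univ)
    fun (i : Fin k) _ (j : Fin l) _ => hτ (Fin.le_def.2 (by simp; omega))

section LinearOrderedCommRing

variable {α : Type*} [CommRing α] [LinearOrder α] [IsStrictOrderedRing α]

lemma add_mul_negPart_le {p q x u v : α} (hp : 0 ≤ p) (hq : 0 ≤ q)
    (h : (p + q) * x = p * u + q * v) :
    (p + q) * x⁻ ≤ p * u⁻ + q * v⁻ := by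
  have hu := mul_le_mul_of_nonneg_left (neg_le_negPart u) hp
  have hv := mul_le_mul_of_nonneg_left (neg_le_negPart v) hq
  have hu₀ := mul_nonneg hp (negPart_nonneg u)
  have hv₀ := mul_nonneg hq (negPart_nonneg v)
  rcases le_total 0 x with hx | hx
  · rw [negPart_eq_zero.2 hx, mul_zero]; linarith
  · rw [negPart_eq_neg.2 hx]; linarith

lemma mul_add_mul_le_add_mul {k l S₁ S₂ a b c : α} (hkl : 0 < k + l) (hab : b ≤ a)
    (hS : l * S₁ ≤ k * S₂) (hc : (k + l) * c = k * a + l * b) :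
    S₁ * a + S₂ * b ≤ (S₁ + S₂) * c := by
  refine le_of_mul_le_mul_left ?_ hkl
  linear_combination -(S₁ + S₂) * hc + mul_le_mul_of_nonneg_left hS (sub_nonneg.2 hab)

end LinearOrderedCommRing

theorem pinball_pava_step_le_general (k l : ℕ)
    (τ : Fin (k + l) → ℝ) (hτmono : Monotone τ)
    (a b c : ℝ) (hab : b < a) (hc : c = (k * a + l * b) / (k + l)) (y : ℝ) :
    ∑ i : Fin (k + l), pinball (τ i) (y - c) ≤
      (∑ i : Fin k, pinball (τ (Fin.castAdd l i)) (y - a)) +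
        ∑ i : Fin l, pinball (τ (Fin.natAdd k i)) (y - b) := by
  rcases Nat.eq_zero_or_pos (k + l) with hkl | hkl
  · obtain ⟨rfl, rfl⟩ : k = 0 ∧ l = 0 := by omega
    simp
  have hkl : (0 : ℝ) < k + l := by exact_mod_cast hkl
  have hc : (k + l) * c = k * a + l * b := by rw [hc]; field_simp
  have hblocks := hτmono.card_nsmul_sum_castAdd_le
  simp only [nsmul_eq_mul] at hblocks
  have hlinear := mul_add_mul_le_add_mul hkl hab.le hblocks hc
  have hconvex := add_mul_negPart_le (x := y - c) (u := y - a) (v := y - b)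
    k.cast_nonneg l.cast_nonneg (by linear_combination -hc)
  simp only [sum_pinball_eq, Fin.sum_univ_add, Fintype.card_fin, Nat.cast_add]
  linarith

/-- The pool-adjacent-violators step: replacing a monotonicity-violating pair of constant
blocks (`k` entries equal to `a` followed by `ℓ` entries equal to `b`, with `a > b`) by
their common weighted mean can only improve the total pinball loss. -/
theorem pinball_pava_step_le (k l : ℕ) (hk : 1 ≤ k) (hl : 1 ≤ l)
    (τ : Fin (k + l) → ℝ) (hτmono : Monotone τ)
    (hτ0 : ∀ i, 0 ≤ τ i) (hτ1 : ∀ i, τ i ≤ 1)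
    (a b c : ℝ) (hab : b < a) (hc : c = (k * a + l * b) / (k + l)) (y : ℝ) :
    ∑ i : Fin (k + l), pinball (τ i) (y - c) ≤
      (∑ i : Fin k, pinball (τ (Fin.castAdd l i)) (y - a)) +
        ∑ i : Fin l, pinball (τ (Fin.natAdd k i)) (y - b) :=
  pinball_pava_step_le_general k l τ hτmono a b c hab hc y
end

section
/- Let m ≥ 1, let v ∈ ℝ^m with sort(v) ≠ v, let g ∈ ℝ^m be strictly increasing (g_1 < g_2 < ⋯ < g_m), and let p > 1. Then the ℓ_p error strictly improves under sorting: ∑_{i=1}^m |sort(v)_i − g_i|^p < ∑_{i=1}^m |v_i − g_i|^p. -/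
/-!
Among all rearrangements `v ∘ σ`, one minimising the error `∑ |v (σ i) - g i| ^ p` must be
sorted: if it had an inversion `i < j`, `v (σ j) < v (σ i)`, exchanging the two entries would
strictly lower the error, because for `x < y` and `s < t` the four numbers
`x - t < x - s, y - t < y - s` have equal outer and inner sums, so strict convexity of `|·| ^ p`
gives `|x - s| ^ p + |y - t| ^ p < |x - t| ^ p + |y - s| ^ p`. Hence sorting is optimal, and an
unsorted `v` is beaten already by undoing one of its inversions.
-/

open Finset Equiv

theorem StrictConvexOn.map_add_map_lt_map_add_map {𝕜 : Type*} [Field 𝕜] [LinearOrder 𝕜]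
    [IsStrictOrderedRing 𝕜] {s : Set 𝕜} {f : 𝕜 → 𝕜} (hf : StrictConvexOn 𝕜 s f)
    {a b c d : 𝕜} (ha : a ∈ s) (hd : d ∈ s) (hab : a < b) (hbd : b < d) (hac : a < c)
    (hcd : c < d) (hsum : b + c = a + d) :
    f b + f c < f a + f d := by
  have hb : b ∈ s := hf.1.ordConnected.out ha hd ⟨hab.le, hbd.le⟩
  have hc : c ∈ s := hf.1.ordConnected.out ha hd ⟨hac.le, hcd.le⟩
  have hlen : d - c = b - a := by linear_combination hsum.symm
  -- both secants are compared with the chord of `f` over `[a, d]`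
  have left : (f b - f a) / (b - a) < (f d - f a) / (d - a) :=
    hf.secant_strict_mono ha hb hd hab.ne' (hab.trans hbd).ne' hbd
  have right : (f d - f a) / (d - a) < (f d - f c) / (b - a) := by
    rw [← hlen]
    convert hf.secant_strict_mono hd ha hc (hab.trans hbd).ne hcd.ne hac using 1 <;>
      rw [← neg_div_neg_eq, neg_sub, neg_sub]
  have := left.trans right
  rw [div_lt_div_iff_of_pos_right (sub_pos.2 hab)] at this
  linarith

theorem strictConvexOn_abs_rpow {p : ℝ} (hp : 1 < p) :
    StrictConvexOn ℝ Set.univ fun x : ℝ ↦ |x| ^ p := by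
  refine ⟨convex_univ, fun x _ y _ hxy a b ha hb hab ↦ ?_⟩
  simp only [smul_eq_mul]
  have hp0 : 0 < p := zero_lt_one.trans hp
  have triangle : |a * x + b * y| ≤ a * |x| + b * |y| := by
    simpa [abs_mul, abs_of_pos ha, abs_of_pos hb] using abs_add_le (a * x) (b * y)
  have convex : (a * |x| + b * |y|) ^ p ≤ a * |x| ^ p + b * |y| ^ p := by
    simpa using (convexOn_rpow hp.le).2 (abs_nonneg x) (abs_nonneg y) ha.le hb.le hab
  by_cases hxy' : |x| = |y|
  · -- then `x = -y ≠ 0`, and the triangle inequality is strict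
    have hx : x = -y := (abs_eq_abs.1 hxy').resolve_left hxy
    have hy : 0 < |y| := abs_pos.2 fun h ↦ hxy (by simp [hx, h])
    have strict : |a * x + b * y| < a * |x| + b * |y| := by
      rw [hx, abs_neg, ← add_mul, hab, one_mul, show a * -y + b * y = (b - a) * y by ring,
        abs_mul]
      exact mul_lt_of_lt_one_left hy (abs_sub_lt_iff.2 ⟨by linarith, by linarith⟩)
    exact (Real.rpow_lt_rpow (abs_nonneg _) strict hp0).trans_le convex
  · have strict := (strictConvexOn_rpow hp).2 (Set.mem_Ici.2 (abs_nonneg x))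
      (Set.mem_Ici.2 (abs_nonneg y)) hxy' ha hb hab
    simp only [smul_eq_mul] at strict
    exact (Real.rpow_le_rpow (abs_nonneg _) triangle hp0.le).trans_lt strict

section Rearrangement

variable {α R : Type*} [AddCommMonoid R] [LinearOrder R] [IsOrderedCancelAddMonoid R]

theorem sum_comp_swap_lt {ι : Type*} [Fintype ι] [DecidableEq ι] (C : ι → α → R) (w : ι → α)
    {i j : ι} (hij : i ≠ j) (h : C i (w j) + C j (w i) < C i (w i) + C j (w j)) :
    ∑ k, C k (w (swap i j k)) < ∑ k, C k (w k) := by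
  rw [← sum_compl_add_sum {i, j}, ← sum_compl_add_sum {i, j} (fun k ↦ C k (w k)),
    sum_pair hij, sum_pair hij, swap_apply_left, swap_apply_right]
  refine add_lt_add_of_le_of_lt (sum_congr rfl fun k hk ↦ ?_).le h
  simp only [mem_compl, mem_insert, mem_singleton, not_or] at hk
  rw [swap_apply_of_ne_of_ne hk.1 hk.2]

variable [LinearOrder α] {m : ℕ} {C : Fin m → α → R}

theorem sum_comp_sort_le
    (hC : ∀ ⦃i j⦄, i < j → ∀ ⦃x y⦄, x < y → C i x + C j y < C i y + C j x)
    (v : Fin m → α) (σ : Perm (Fin m)) :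
    ∑ i, C i (v (Tuple.sort v i)) ≤ ∑ i, C i (v (σ i)) := by
  obtain ⟨τ, hτ⟩ := Finite.exists_min fun ρ : Perm (Fin m) ↦ ∑ i, C i (v (ρ i))
  have hmono : Monotone (v ∘ τ) := by
    refine monotone_iff_forall_lt.2 fun i j hij ↦ not_lt.1 fun hlt ↦ ?_
    have := sum_comp_swap_lt C (v ∘ τ) hij.ne (hC hij hlt)
    exact not_lt_of_ge (hτ (τ * swap i j)) this
  have hsort : v ∘ Tuple.sort v = v ∘ τ := (Tuple.comp_sort_eq_comp_iff_monotone.2 hmono).symm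
  calc ∑ i, C i (v (Tuple.sort v i)) = ∑ i, C i (v (τ i)) := by
        simp only [← Function.comp_apply (f := v), hsort]
    _ ≤ _ := hτ σ

theorem sum_comp_sort_lt
    (hC : ∀ ⦃i j⦄, i < j → ∀ ⦃x y⦄, x < y → C i x + C j y < C i y + C j x)
    (v : Fin m → α) (hv : ¬Monotone v) :
    ∑ i, C i (v (Tuple.sort v i)) < ∑ i, C i (v i) := by
  obtain ⟨i, j, hij, hlt⟩ : ∃ i j, i < j ∧ v j < v i := by
    simpa [monotone_iff_forall_lt] using hv
  calc ∑ i, C i (v (Tuple.sort v i)) ≤ ∑ k, C k (v (swap i j k)) :=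
        sum_comp_sort_le hC v (swap i j)
    _ < ∑ k, C k (v k) := sum_comp_swap_lt C v hij.ne (hC hij hlt)

end Rearrangement

theorem lp_sort_lt_general (m : ℕ) (v g : Fin m → ℝ)
    (hv : v ∘ Tuple.sort v ≠ v) (hg : StrictMono g) (p : ℝ) (hp : 1 < p) :
    ∑ i, |(v ∘ Tuple.sort v) i - g i| ^ p < ∑ i, |v i - g i| ^ p := by
  have hv' : ¬Monotone v := fun h ↦ hv (by rw [Tuple.sort_eq_refl_iff_monotone.2 h]; rfl)
  refine sum_comp_sort_lt (C := fun i x ↦ |x - g i| ^ p) (fun i j hij x y hxy ↦ ?_) v hv'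
  rw [add_comm (|y - g i| ^ p)]
  exact (strictConvexOn_abs_rpow hp).map_add_map_lt_map_add_map (Set.mem_univ _)
    (Set.mem_univ _) (by linarith [hg hij]) (by linarith) (by linarith) (by linarith [hg hij])
    (by ring)

/-- If `v` is not already sorted, `g` is strictly increasing, and `p > 1`,
then sorting strictly improves the ℓ_p error. -/
theorem lp_sort_lt (m : ℕ) (hm : 1 ≤ m) (v g : Fin m → ℝ)
    (hv : v ∘ Tuple.sort v ≠ v) (hg : StrictMono g) (p : ℝ) (hp : 1 < p) :
    ∑ i, |(v ∘ Tuple.sort v) i - g i| ^ p < ∑ i, |v i - g i| ^ p :=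
  lp_sort_lt_general m v g hv hg p hp
end

section
/- Let μ be a probability measure on ℝ with finite first moment (∫|x| dμ(x) < ∞), whose cumulative distribution function F(y) = μ((−∞, y]) is strictly increasing on ℝ and differentiable with derivative f. Then for every Y ∈ ℝ, the continuous ranked probability score equals twice the integrated pinball loss: ∫_{−∞}^{∞} (F(y) − 1{Y ≤ y})² dy = 2·∫_0^1 ψ_τ(Y − F^{−1}(τ)) dτ, where F^{−1}(τ) = inf{y ∈ ℝ : F(y) ≥ τ} for τ ∈ (0,1). -/
open MeasureTheory Set Filter Topology ProbabilityTheory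
open scoped ENNReal

theorem pinball_eq_max (τ z : ℝ) : pinball τ z = max (τ * z) ((τ - 1) * z) := by
  unfold pinball
  split_ifs with hz
  · exact (max_eq_left (by nlinarith)).symm
  · rw [max_eq_right (by nlinarith)]
    ring

theorem continuous_pinball : Continuous (Function.uncurry pinball) := by
  simp only [Function.uncurry_def, pinball_eq_max]
  fun_prop

theorem pinball_nonneg {τ : ℝ} (hτ : τ ∈ Icc (0 : ℝ) 1) (z : ℝ) : 0 ≤ pinball τ z := by
  rw [pinball_eq_max]
  rcases le_total 0 z with hz | hz
  · exact le_max_of_le_left (mul_nonneg hτ.1 hz)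
  · exact le_max_of_le_right (mul_nonneg_of_nonpos_of_nonpos (by linarith [hτ.2]) hz)

@[simp] theorem pinball_zero (τ : ℝ) : pinball τ 0 = 0 := by simp [pinball]

@[simp] theorem pinball_one (τ : ℝ) : pinball τ 1 = τ := by simp [pinball]

@[simp] theorem pinball_neg_one (τ : ℝ) : pinball τ (-1) = 1 - τ := by simp [pinball]

theorem StieltjesFunction.csInf_setOf_le_le_iff {F : StieltjesFunction ℝ} {τ : ℝ}
    (hne : {y | τ ≤ F y}.Nonempty) (hbdd : BddBelow {y | τ ≤ F y}) (y : ℝ) :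
    sInf {y | τ ≤ F y} ≤ y ↔ τ ≤ F y := by
  refine ⟨fun hy => (F.mono hy).trans' ?_, fun hy => csInf_le hbdd hy⟩
  set a := sInf {y | τ ≤ F y}
  have hright : ∀ x > a, τ ≤ F x := fun x hx => by
    obtain ⟨s, hs, hsx⟩ := exists_lt_of_csInf_lt hne hx
    exact hs.trans (F.mono hsx.le)
  exact ge_of_tendsto ((F.right_continuous a).mono Ioi_subset_Ici_self)
    (eventually_nhdsWithin_of_forall hright)

theorem ProbabilityTheory.csInf_setOf_le_cdf_le_iff (μ : Measure ℝ) [IsProbabilityMeasure μ]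
    {τ : ℝ} (hτ : τ ∈ Ioo (0 : ℝ) 1) (y : ℝ) :
    sInf {x | τ ≤ cdf μ x} ≤ y ↔ τ ≤ cdf μ y := by
  refine StieltjesFunction.csInf_setOf_le_le_iff ?_ ?_ y
  · obtain ⟨x, hx⟩ := ((tendsto_cdf_atTop μ).eventually (eventually_gt_nhds hτ.2)).exists
    exact ⟨x, hx.le⟩
  · obtain ⟨x₀, hx₀⟩ :=
      eventually_atBot.mp ((tendsto_cdf_atBot μ).eventually (eventually_lt_nhds hτ.1))
    exact ⟨x₀, fun x hx => le_of_not_gt fun hlt => (hx₀ x hlt.le).not_ge hx⟩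

theorem setLIntegral_Ioc_ofReal_eq_intervalIntegral {g : ℝ → ℝ} (hg : Continuous g) {a b : ℝ}
    (hab : a ≤ b) (hg₀ : ∀ x ∈ Ioc a b, 0 ≤ g x) :
    ∫⁻ x in Ioc a b, ENNReal.ofReal (g x) = ENNReal.ofReal (∫ x in a..b, g x) := by
  rw [intervalIntegral.integral_of_le hab, ofReal_integral_eq_lintegral_ofReal hg.integrableOn_Ioc
    (ae_restrict_of_forall_mem measurableSet_Ioc hg₀)]

theorem lintegral_Ioc_pinball_ite_le_sub {t : ℝ} (ht : t ∈ Icc (0 : ℝ) 1) (p : Prop)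
    [Decidable p] :
    ∫⁻ τ in Ioc 0 1, ENNReal.ofReal (pinball τ ((if τ ≤ t then 1 else 0) - if p then 1 else 0)) =
      ENNReal.ofReal ((t - if p then 1 else 0) ^ 2 / 2) := by
  by_cases hp : p
  · have h : ∀ τ, ENNReal.ofReal (pinball τ ((if τ ≤ t then 1 else 0) - if p then 1 else 0)) =
        (Ioi t).indicator (fun τ => ENNReal.ofReal (1 - τ)) τ := fun τ => by
      by_cases hτ : τ ≤ t <;> simp [hp, hτ, indicator]
    simp_rw [h, lintegral_indicator measurableSet_Ioi, Measure.restrict_restrict measurableSet_Ioi,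
      inter_comm, Ioc_inter_Ioi, sup_eq_right.2 ht.1]
    rw [setLIntegral_Ioc_ofReal_eq_intervalIntegral (by fun_prop) ht.2
        fun τ hτ => sub_nonneg.2 hτ.2,
      intervalIntegral.integral_sub intervalIntegrable_const intervalIntegral.intervalIntegrable_id]
    simp only [intervalIntegral.integral_const, smul_eq_mul, mul_one, integral_id, one_pow, hp,
      if_true]
    congr 1
    ring
  · have h : ∀ τ, ENNReal.ofReal (pinball τ ((if τ ≤ t then 1 else 0) - if p then 1 else 0)) =
        (Iic t).indicator (fun τ => ENNReal.ofReal τ) τ := fun τ => by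
      by_cases hτ : τ ≤ t <;> simp [hp, hτ]
    simp_rw [h, lintegral_indicator measurableSet_Iic, Measure.restrict_restrict measurableSet_Iic,
      Iic_inter_Ioc_of_le ht.2]
    rw [setLIntegral_Ioc_ofReal_eq_intervalIntegral continuous_id' ht.1 fun τ hτ => hτ.1.le]
    simp [hp]

theorem lintegral_pinball_ite_le_sub_ite_le {τ : ℝ} (hτ : τ ∈ Icc (0 : ℝ) 1) (q Y : ℝ) :
    ∫⁻ y, ENNReal.ofReal (pinball τ ((if q ≤ y then 1 else 0) - if Y ≤ y then 1 else 0)) =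
      ENNReal.ofReal (pinball τ (Y - q)) := by
  rcases le_or_gt q Y with hqY | hYq
  · have h : ∀ y, ENNReal.ofReal (pinball τ ((if q ≤ y then 1 else 0) - if Y ≤ y then 1 else 0)) =
        (Ico q Y).indicator (fun _ => ENNReal.ofReal τ) y := fun y => by
      by_cases hY : Y ≤ y
      · simp [hY, hqY.trans hY, indicator]
      · by_cases hq : q ≤ y <;> simp [hq, hY, indicator]
    simp_rw [h, lintegral_indicator_const measurableSet_Ico, Real.volume_Ico,
      ← ENNReal.ofReal_mul hτ.1, pinball, if_pos (sub_nonneg.2 hqY)]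
  · have h : ∀ y, ENNReal.ofReal (pinball τ ((if q ≤ y then 1 else 0) - if Y ≤ y then 1 else 0)) =
        (Ico Y q).indicator (fun _ => ENNReal.ofReal (1 - τ)) y := fun y => by
      by_cases hq : q ≤ y
      · simp [hq, hYq.le.trans hq, indicator]
      · by_cases hY : Y ≤ y <;> simp [hq, hY, indicator]
    simp_rw [h, lintegral_indicator_const measurableSet_Ico, Real.volume_Ico,
      ← ENNReal.ofReal_mul (sub_nonneg.2 hτ.2), pinball, if_neg (not_le.2 (sub_neg.2 hYq)),
      neg_sub]

theorem integral_toReal_lintegral_comm {α β : Type*} [MeasurableSpace α] [MeasurableSpace β]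
    {μ : Measure α} {ν : Measure β} [SFinite μ] [SFinite ν] {K : α → β → ℝ≥0∞}
    (hK : Measurable (Function.uncurry K)) (hμ : ∀ᵐ x ∂μ, ∫⁻ y, K x y ∂ν < ∞)
    (hν : ∀ᵐ y ∂ν, ∫⁻ x, K x y ∂μ < ∞) :
    ∫ x, (∫⁻ y, K x y ∂ν).toReal ∂μ = ∫ y, (∫⁻ x, K x y ∂μ).toReal ∂ν := by
  rw [integral_toReal hK.lintegral_prod_right.aemeasurable hμ,
    integral_toReal hK.lintegral_prod_left.aemeasurable hν,
    lintegral_lintegral_swap hK.aemeasurable]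

theorem crps_eq_two_integral_pinball_general (μ : Measure ℝ) [IsProbabilityMeasure μ]
    (F : ℝ → ℝ) (hF : ∀ y, F y = (μ (Set.Iic y)).toReal)
    (Q : ℝ → ℝ) (hQ : ∀ τ ∈ Set.Ioo (0 : ℝ) 1, Q τ = sInf {y : ℝ | τ ≤ F y})
    (Y : ℝ) :
    ∫ y, (F y - (if Y ≤ y then (1 : ℝ) else 0)) ^ 2 =
      2 * ∫ τ in (0 : ℝ)..1, pinball τ (Y - Q τ) := by
  obtain rfl : F = cdf μ := funext fun y => (hF y).trans (cdf_eq_real μ y).symm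
  set K : ℝ → ℝ → ℝ≥0∞ := fun τ y =>
    ENNReal.ofReal (pinball τ ((if τ ≤ cdf μ y then 1 else 0) - if Y ≤ y then 1 else 0))
  have hK : Measurable (Function.uncurry K) :=
    ENNReal.measurable_ofReal.comp <| continuous_pinball.measurable.comp <|
      measurable_fst.prodMk <|
        (Measurable.ite (measurableSet_le measurable_fst
          ((cdf μ).mono.measurable.comp measurable_snd)) measurable_const measurable_const).sub
        (Measurable.ite (measurableSet_le measurable_const measurable_snd)
          measurable_const measurable_const)
  have hK_τ (y : ℝ) : ∫⁻ τ in Ioo 0 1, K τ y =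
      ENNReal.ofReal ((cdf μ y - if Y ≤ y then 1 else 0) ^ 2 / 2) := by
    rw [setLIntegral_congr Ioo_ae_eq_Ioc]
    exact lintegral_Ioc_pinball_ite_le_sub ⟨cdf_nonneg μ y, cdf_le_one μ y⟩ _
  have hK_y (τ : ℝ) (hτ : τ ∈ Ioo (0 : ℝ) 1) :
      ∫⁻ y, K τ y = ENNReal.ofReal (pinball τ (Y - Q τ)) := by
    have hQ_le (y : ℝ) : τ ≤ cdf μ y ↔ Q τ ≤ y := by
      rw [hQ τ hτ, csInf_setOf_le_cdf_le_iff μ hτ]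
    simp_rw [K, hQ_le]
    exact lintegral_pinball_ite_le_sub_ite_le (Ioo_subset_Icc_self hτ) _ _
  calc ∫ y, (cdf μ y - if Y ≤ y then 1 else 0) ^ 2
      = 2 * ∫ y, (∫⁻ τ in Ioo 0 1, K τ y).toReal := by
        rw [← integral_const_mul]
        congr 1 with y
        rw [hK_τ, ENNReal.toReal_ofReal (by positivity)]
        ring
    _ = 2 * ∫ τ in Ioo 0 1, (∫⁻ y, K τ y).toReal := by
        rw [integral_toReal_lintegral_comm hK]
        · exact ae_restrict_of_forall_mem measurableSet_Ioo
            fun τ hτ => hK_y τ hτ ▸ ENNReal.ofReal_lt_top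
        · exact Eventually.of_forall fun y => hK_τ y ▸ ENNReal.ofReal_lt_top
    _ = 2 * ∫ τ in (0 : ℝ)..1, pinball τ (Y - Q τ) := by
        rw [intervalIntegral.integral_of_le zero_le_one, integral_Ioc_eq_integral_Ioo]
        congr 1
        refine setIntegral_congr_fun measurableSet_Ioo fun τ hτ => ?_
        rw [hK_y τ hτ, ENNReal.toReal_ofReal (pinball_nonneg (Ioo_subset_Icc_self hτ) _)]

/-- The continuous ranked probability score equals twice the integrated pinball loss:
for a probability measure with finite first moment whose CDF `F` is strictly increasing
and differentiable, `∫ (F(y) - 1{Y ≤ y})² dy = 2 ∫_0^1 ψ_τ(Y - F⁻¹(τ)) dτ`. -/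
theorem crps_eq_two_integral_pinball (μ : Measure ℝ) [IsProbabilityMeasure μ]
    (hint : Integrable (fun x => |x|) μ)
    (F : ℝ → ℝ) (hF : ∀ y, F y = (μ (Set.Iic y)).toReal)
    (hFmono : StrictMono F)
    (f : ℝ → ℝ) (hf : ∀ y, HasDerivAt F (f y) y)
    (Q : ℝ → ℝ) (hQ : ∀ τ ∈ Set.Ioo (0 : ℝ) 1, Q τ = sInf {y : ℝ | τ ≤ F y})
    (Y : ℝ) :
    ∫ y, (F y - (if Y ≤ y then (1 : ℝ) else 0)) ^ 2 =
      2 * ∫ τ in (0 : ℝ)..1, pinball τ (Y - Q τ) :=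
  crps_eq_two_integral_pinball_general μ F hF Q hQ Y
end

section
/- A quantile average is always sharper than a probability average: let μ_1, …, μ_p be probability measures on ℝ, let k ≥ 2 be an even integer with ∫|x|^k dμ_j(x) < ∞ for each j, and let w_1, …, w_p ≥ 0 with ∑_{j=1}^p w_j = 1. Then the k-th moment of the quantile average is at most the k-th moment of the probability average: ∫_0^1 (∑_{j=1}^p w_j·Q_{μ_j}(u))^k du ≤ ∫_ℝ x^k d(∑_{j=1}^p w_j·μ_j)(x). -/
open MeasureTheory

/-- The quantile function of a probability measure on ℝ:
`Q_μ(τ) = inf {x : F_μ(x) ≥ τ}` where `F_μ(x) = μ((-∞, x])`. -/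
noncomputable def quantileFn (μ : Measure ℝ) (τ : ℝ) : ℝ :=
  sInf {x : ℝ | τ ≤ (μ (Set.Iic x)).toReal}

/-!
If `U` is uniform on `(0, 1)`, then `quantileFn μ U` has law `μ`. Realising all the `μ i` on
this one probability space, the quantile average is the law of `∑ i, w i * quantileFn (μ i) U`,
and Jensen's inequality for the convex map `x ↦ x ^ k`, applied pointwise in `U`, bounds its
`k`-th power by `∑ i, w i * quantileFn (μ i) U ^ k`, whose expectation is the `k`-th moment of
the mixture `∑ i, w i • μ i`.
-/

open ProbabilityTheory Set Filter Topology

section Quantile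

variable (μ : Measure ℝ)

lemma bddBelow_setOf_le_cdf {τ : ℝ} (hτ : 0 < τ) : BddBelow {x | τ ≤ cdf μ x} := by
  obtain ⟨y, hy⟩ := ((tendsto_cdf_atBot μ).eventually (eventually_lt_nhds hτ)).exists
  refine ⟨y, fun z hz => le_of_not_gt fun hzy => ?_⟩
  exact (hz.trans (monotone_cdf μ hzy.le)).not_gt hy

lemma nonempty_setOf_le_cdf {τ : ℝ} (hτ : τ < 1) : {x | τ ≤ cdf μ x}.Nonempty :=
  (((tendsto_cdf_atTop μ).eventually (eventually_gt_nhds hτ)).exists).imp fun _ h => h.le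

variable [IsProbabilityMeasure μ]

lemma quantileFn_eq_sInf_cdf (τ : ℝ) : quantileFn μ τ = sInf {x | τ ≤ cdf μ x} := by
  simp [quantileFn, cdf_eq_real, measureReal_def]

/-- Right-continuity of the cdf is what gives `τ ≤ cdf μ (quantileFn μ τ)`. -/
lemma quantileFn_le_iff {τ : ℝ} (hτ : τ ∈ Ioo 0 1) (x : ℝ) :
    quantileFn μ τ ≤ x ↔ τ ≤ cdf μ x := by
  rw [quantileFn_eq_sInf_cdf]
  refine ⟨fun h => ?_, fun h => csInf_le (bddBelow_setOf_le_cdf μ hτ.1) h⟩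
  have above : ∀ y, x < y → τ ≤ cdf μ y := fun y hy => by
    obtain ⟨z, hz, hzy⟩ := exists_lt_of_csInf_lt (nonempty_setOf_le_cdf μ hτ.2) (h.trans_lt hy)
    exact hz.trans (monotone_cdf μ hzy.le)
  have hright : Tendsto (cdf μ) (𝓝[>] x) (𝓝 (cdf μ x)) :=
    ((cdf μ).right_continuous x).tendsto.mono_left (nhdsWithin_mono x Ioi_subset_Ici_self)
  exact ge_of_tendsto hright (eventually_nhdsWithin_of_forall above)

lemma monotoneOn_quantileFn : MonotoneOn (quantileFn μ) (Ioo 0 1) := by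
  intro τ₁ h₁ τ₂ h₂ h
  simp only [quantileFn_eq_sInf_cdf]
  exact csInf_le_csInf (bddBelow_setOf_le_cdf μ h₁.1) (nonempty_setOf_le_cdf μ h₂.2)
    fun x hx => h.trans hx

lemma aemeasurable_quantileFn : AEMeasurable (quantileFn μ) (volume.restrict (Ioo 0 1)) :=
  aemeasurable_restrict_of_monotoneOn measurableSet_Ioo (monotoneOn_quantileFn μ)

theorem map_quantileFn : (volume.restrict (Ioo 0 1)).map (quantileFn μ) = μ := by
  have : IsProbabilityMeasure (volume.restrict (Ioo (0 : ℝ) 1)) := ⟨by simp⟩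
  have := Measure.isProbabilityMeasure_map (aemeasurable_quantileFn μ)
  refine Measure.ext_of_Iic _ _ fun x => ?_
  rw [Measure.map_apply_of_aemeasurable (aemeasurable_quantileFn μ) measurableSet_Iic,
    Measure.restrict_apply' measurableSet_Ioo, ← ofReal_cdf]
  have hpre : quantileFn μ ⁻¹' Iic x ∩ Ioo 0 1 = Ioo 0 1 ∩ Iic (cdf μ x) := by
    ext τ
    simp only [mem_inter_iff, mem_preimage, mem_Iic]
    exact ⟨fun h => ⟨h.2, (quantileFn_le_iff μ h.2 x).1 h.1⟩,
      fun h => ⟨(quantileFn_le_iff μ h.1 x).2 h.2, h.1⟩⟩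
  rw [hpre, measure_congr ((Ioo_ae_eq_Ioc (μ := volume)).inter (ae_eq_refl (Iic (cdf μ x)))),
    Ioc_inter_Iic, inf_eq_right.2 (cdf_le_one μ x), Real.volume_Ioc, sub_zero]

theorem integral_comp_quantileFn {f : ℝ → ℝ} (hf : AEStronglyMeasurable f μ) :
    ∫ u in Ioo 0 1, f (quantileFn μ u) = ∫ x, f x ∂μ := by
  rw [← integral_map (aemeasurable_quantileFn μ) (by rwa [map_quantileFn]), map_quantileFn]

theorem integrableOn_comp_quantileFn {f : ℝ → ℝ} (hf : Integrable f μ) :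
    IntegrableOn (fun u => f (quantileFn μ u)) (Ioo 0 1) := by
  rw [← map_quantileFn μ] at hf
  exact hf.comp_aemeasurable (aemeasurable_quantileFn μ)

end Quantile

theorem integral_finsetSum_ofReal_smul_measure {α ι : Type*} [MeasurableSpace α]
    {s : Finset ι} {μ : ι → Measure α} {f : α → ℝ} (hf : ∀ i ∈ s, Integrable f (μ i))
    {w : ι → ℝ} (hw : ∀ i ∈ s, 0 ≤ w i) :
    ∫ x, f x ∂(∑ i ∈ s, ENNReal.ofReal (w i) • μ i) = ∑ i ∈ s, w i * ∫ x, f x ∂μ i := by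
  rw [integral_finsetSum_measure fun i hi => (hf i hi).smul_measure ENNReal.ofReal_ne_top]
  refine Finset.sum_congr rfl fun i hi => ?_
  rw [integral_smul_measure, ENNReal.toReal_ofReal (hw i hi), smul_eq_mul]

theorem integral_comp_quantile_average_le {ι : Type*} [Fintype ι] (μ : ι → Measure ℝ)
    [∀ i, IsProbabilityMeasure (μ i)] {φ : ℝ → ℝ} (hφ : ConvexOn ℝ univ φ)
    (hφ_nonneg : ∀ x, 0 ≤ φ x)
    (hφμ : ∀ i, Integrable φ (μ i)) {w : ι → ℝ} (hw : ∀ i, 0 ≤ w i) (hws : ∑ i, w i = 1) :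
    ∫ u in Ioo 0 1, φ (∑ i, w i * quantileFn (μ i) u) ≤
      ∫ x, φ x ∂(∑ i, ENNReal.ofReal (w i) • μ i) := by
  have hint : ∀ i, IntegrableOn (fun u => w i * φ (quantileFn (μ i) u)) (Ioo 0 1) :=
    fun i => (integrableOn_comp_quantileFn (μ i) (hφμ i)).const_mul _
  have jensen : ∀ u, φ (∑ i, w i * quantileFn (μ i) u) ≤ ∑ i, w i * φ (quantileFn (μ i) u) :=
    fun u => by
      simpa only [smul_eq_mul] using
        hφ.map_sum_le (fun i _ => hw i) hws fun i _ => mem_univ (quantileFn (μ i) u)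
  calc ∫ u in Ioo 0 1, φ (∑ i, w i * quantileFn (μ i) u)
      ≤ ∫ u in Ioo 0 1, ∑ i, w i * φ (quantileFn (μ i) u) :=
        integral_mono_of_nonneg (.of_forall fun _ => hφ_nonneg _)
          (integrable_finsetSum _ fun i _ => hint i) (.of_forall jensen)
    _ = ∑ i, w i * ∫ x, φ x ∂μ i := by
        rw [integral_finsetSum _ fun i _ => hint i]
        simp only [integral_const_mul, integral_comp_quantileFn _ (hφμ _).aestronglyMeasurable]
    _ = ∫ x, φ x ∂(∑ i, ENNReal.ofReal (w i) • μ i) :=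
        (integral_finsetSum_ofReal_smul_measure (fun i _ => hφμ i) fun i _ => hw i).symm

theorem quantile_average_sharper_general (p : ℕ)
    (μ : Fin p → Measure ℝ) [∀ j, IsProbabilityMeasure (μ j)]
    (k : ℕ) (hkeven : Even k)
    (hint : ∀ j, Integrable (fun x => |x| ^ k) (μ j))
    (w : Fin p → ℝ) (hw : ∀ j, 0 ≤ w j) (hws : ∑ j, w j = 1) :
    ∫ u in (0 : ℝ)..1, (∑ j, w j * quantileFn (μ j) u) ^ k ≤
      ∫ x, x ^ k ∂(∑ j, ENNReal.ofReal (w j) • μ j) := by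
  have hpow : ∀ j, Integrable (fun x : ℝ => x ^ k) (μ j) := fun j => by
    simpa only [hkeven.pow_abs] using hint j
  rw [intervalIntegral.integral_of_le zero_le_one, integral_Ioc_eq_integral_Ioo]
  exact integral_comp_quantile_average_le μ hkeven.convexOn_pow (fun x => hkeven.pow_nonneg x)
    hpow hw hws

/-- A quantile average is always sharper than a probability average: for even `k ≥ 2`,
the `k`-th moment of the quantile average is at most the `k`-th moment of the mixture. -/
theorem quantile_average_sharper (p : ℕ) (hp : 1 ≤ p)
    (μ : Fin p → Measure ℝ) [∀ j, IsProbabilityMeasure (μ j)]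
    (k : ℕ) (hk : 2 ≤ k) (hkeven : Even k)
    (hint : ∀ j, Integrable (fun x => |x| ^ k) (μ j))
    (w : Fin p → ℝ) (hw : ∀ j, 0 ≤ w j) (hws : ∑ j, w j = 1) :
    ∫ u in (0 : ℝ)..1, (∑ j, w j * quantileFn (μ j) u) ^ k ≤
      ∫ x, x ^ k ∂(∑ j, ENNReal.ofReal (w j) • μ j) :=
  quantile_average_sharper_general p μ k hkeven hint w hw hws
end

section
/- Let w_1, w_2 ∈ (0,1) with w_1 + w_2 = 1. Let f_1, f_2 : ℝ → (0,∞) be such that log f_1 is concave on ℝ and f_2(v)/f_1(v) → 0 as v → ∞. Let Q_1, Q_2 : (0,1) → ℝ satisfy Q_j(u) → ∞ as u → 1⁻ for j = 1, 2. Then f_1(w_1·Q_1(u) + w_2·Q_2(u)) · (w_1/f_1(Q_1(u)) + w_2/f_2(Q_2(u))) → ∞ as u → 1⁻. -/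
/-!
Log-concavity of `f₁` gives `f₁(Q̄) ≥ f₁(Q₁)^w₁ · f₁(Q₂)^w₂`, and the weighted harmonic–geometric
mean inequality gives `w₁/f₁(Q₁) + w₂/f₂(Q₂) ≥ f₁(Q₁)^(-w₁) · f₂(Q₂)^(-w₂)`. Multiplying, the
`f₁(Q₁)` factors cancel and the product is at least `(f₁(Q₂)/f₂(Q₂))^w₂`, which tends to `∞` because
`Q₂ → ∞`.
-/

open Filter Real

theorem ConcaveOn.rpow_mul_rpow_le_of_log {E : Type*} [AddCommGroup E] [Module ℝ E]
    {s : Set E} {f : E → ℝ} (hf : ConcaveOn ℝ s fun v => log (f v))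
    (hpos : ∀ v ∈ s, 0 < f v) {x y : E} (hx : x ∈ s) (hy : y ∈ s) {a b : ℝ}
    (ha : 0 ≤ a) (hb : 0 ≤ b) (hab : a + b = 1) :
    f x ^ a * f y ^ b ≤ f (a • x + b • y) :=
  calc f x ^ a * f y ^ b = exp (a * log (f x) + b * log (f y)) := by
        rw [rpow_def_of_pos (hpos x hx), rpow_def_of_pos (hpos y hy), ← exp_add]
        ring_nf
    _ ≤ exp (log (f (a • x + b • y))) := exp_le_exp.2 (by simpa using hf.2 hx hy ha hb hab)
    _ = f (a • x + b • y) := exp_log (hpos _ (hf.1 hx hy ha hb hab))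

theorem Real.inv_rpow_mul_rpow_le_add_div {p q a b : ℝ} (hp : 0 < p) (hq : 0 < q)
    (ha : 0 ≤ a) (hb : 0 ≤ b) (hab : a + b = 1) :
    (p ^ a * q ^ b)⁻¹ ≤ a / p + b / q := by
  have h := geom_mean_le_arith_mean2_weighted ha hb (inv_nonneg.2 hp.le) (inv_nonneg.2 hq.le) hab
  rwa [inv_rpow hp.le, inv_rpow hq.le, ← mul_inv, ← div_eq_mul_inv, ← div_eq_mul_inv] at h

theorem ConcaveOn.div_rpow_le_mul_add_div_of_log {E : Type*} [AddCommGroup E] [Module ℝ E]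
    {s : Set E} {f : E → ℝ} (hf : ConcaveOn ℝ s fun v => log (f v))
    (hpos : ∀ v ∈ s, 0 < f v) {x y : E} (hx : x ∈ s) (hy : y ∈ s) {c a b : ℝ} (hc : 0 < c)
    (ha : 0 ≤ a) (hb : 0 ≤ b) (hab : a + b = 1) :
    (f y / c) ^ b ≤ f (a • x + b • y) * (a / f x + b / c) := by
  have hfx := hpos x hx
  have hfy := hpos y hy
  calc (f y / c) ^ b = (f x ^ a * f y ^ b) * (f x ^ a * c ^ b)⁻¹ := by
        rw [div_rpow hfy.le hc.le]
        field_simp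
    _ ≤ f (a • x + b • y) * (a / f x + b / c) :=
        mul_le_mul (hf.rpow_mul_rpow_le_of_log hpos hx hy ha hb hab)
          (inv_rpow_mul_rpow_le_add_div hfx hc ha hb hab) (by positivity)
          (hpos _ (hf.1 hx hy ha hb hab)).le

theorem quantile_average_thin_tails_general (w₁ w₂ : ℝ)
    (hw₁ : w₁ ∈ Set.Ioo (0 : ℝ) 1) (hw₂ : w₂ ∈ Set.Ioo (0 : ℝ) 1) (hsum : w₁ + w₂ = 1)
    (f₁ f₂ : ℝ → ℝ) (hf₁ : ∀ v, 0 < f₁ v) (hf₂ : ∀ v, 0 < f₂ v)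
    (hconc : ConcaveOn ℝ Set.univ fun v => Real.log (f₁ v))
    (hlim : Tendsto (fun v => f₂ v / f₁ v) atTop (nhds 0))
    (Q₁ Q₂ : ℝ → ℝ)
    (hQ₂ : Tendsto Q₂ (nhdsWithin 1 (Set.Iio 1)) atTop) :
    Tendsto (fun u => f₁ (w₁ * Q₁ u + w₂ * Q₂ u) *
        (w₁ / f₁ (Q₁ u) + w₂ / f₂ (Q₂ u)))
      (nhdsWithin 1 (Set.Iio 1)) atTop := by
  have hratio : Tendsto (fun v => f₁ v / f₂ v) atTop atTop := by
    have h : Tendsto (fun v => f₂ v / f₁ v) atTop (nhdsWithin 0 (Set.Ioi 0)) :=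
      tendsto_nhdsWithin_iff.2 ⟨hlim, Eventually.of_forall fun v => div_pos (hf₂ v) (hf₁ v)⟩
    simpa only [Pi.inv_def, inv_div] using h.inv_tendsto_nhdsGT_zero
  refine tendsto_atTop_mono (fun u => ?_) ((tendsto_rpow_atTop hw₂.1).comp (hratio.comp hQ₂))
  exact hconc.div_rpow_le_mul_add_div_of_log (fun v _ => hf₁ v)
    (Set.mem_univ (Q₁ u)) (Set.mem_univ (Q₂ u)) (hf₂ (Q₂ u)) hw₁.1.le hw₂.1.le hsum

/-- The quantile average has thinner tails than its heavier-tailed component: with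
`1/f̄(Q̄(u)) = w₁/f₁(Q₁(u)) + w₂/f₂(Q₂(u))` and `Q̄(u) = w₁ Q₁(u) + w₂ Q₂(u)`,
if `log f₁` is concave and `f₂ = o(f₁)` at `∞`, then `f₁(Q̄(u))/f̄(Q̄(u)) → ∞`
as `u → 1⁻`, i.e., `f̄ = o(f₁)` along the quantile average. -/
theorem quantile_average_thin_tails (w₁ w₂ : ℝ)
    (hw₁ : w₁ ∈ Set.Ioo (0 : ℝ) 1) (hw₂ : w₂ ∈ Set.Ioo (0 : ℝ) 1) (hsum : w₁ + w₂ = 1)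
    (f₁ f₂ : ℝ → ℝ) (hf₁ : ∀ v, 0 < f₁ v) (hf₂ : ∀ v, 0 < f₂ v)
    (hconc : ConcaveOn ℝ Set.univ fun v => Real.log (f₁ v))
    (hlim : Tendsto (fun v => f₂ v / f₁ v) atTop (nhds 0))
    (Q₁ Q₂ : ℝ → ℝ)
    (hQ₁ : Tendsto Q₁ (nhdsWithin 1 (Set.Iio 1)) atTop)
    (hQ₂ : Tendsto Q₂ (nhdsWithin 1 (Set.Iio 1)) atTop) :
    Tendsto (fun u => f₁ (w₁ * Q₁ u + w₂ * Q₂ u) *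
        (w₁ / f₁ (Q₁ u) + w₂ / f₂ (Q₂ u)))
      (nhdsWithin 1 (Set.Iio 1)) atTop :=
  quantile_average_thin_tails_general w₁ w₂ hw₁ hw₂ hsum f₁ f₂ hf₁ hf₂ hconc hlim Q₁ Q₂ hQ₂
end

section
/- Let m ≥ 1, let 0 ≤ τ₁ < τ₂ < ⋯ < τ_m ≤ 1 be strictly increasing quantile levels, let v ∈ ℝ^m, and let u ∈ K_m be the isotonic projection of v, i.e., u minimizes the Euclidean norm ‖v − u‖₂ over all u ∈ K_m. If u ≠ v, then for every y ∈ ℝ the total pinball loss strictly improves: ∑_{i=1}^m ψ_{τ_i}(y − u_i) < ∑_{i=1}^m ψ_{τ_i}(y − v_i). -/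
open Filter Topology Matrix

lemma le_pinball_sub_pinball (τ a b y : ℝ) :
    (b - a) * ((if y < a then 1 else 0) - τ) ≤ pinball τ (y - b) - pinball τ (y - a) := by
  unfold pinball
  split_ifs <;> nlinarith

section Projection

variable {ι : Type*} [Fintype ι] {K : Set (ι → ℝ)} {u v : ι → ℝ}

theorem dotProduct_sub_nonpos_of_isMinOn
    (hmin : IsMinOn (fun w => ∑ i, (v i - w i) ^ 2) K u) {h : ι → ℝ}
    (hK : ∀ᶠ ε in 𝓝[>] (0 : ℝ), u + ε • h ∈ K) : (v - u) ⬝ᵥ h ≤ 0 := by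
  by_contra! hpos
  have hsmall : ∀ᶠ ε in 𝓝[>] (0 : ℝ), ε * (h ⬝ᵥ h) < 2 * ((v - u) ⬝ᵥ h) := by
    have hcont : Continuous fun ε : ℝ => ε * (h ⬝ᵥ h) := by fun_prop
    exact nhdsWithin_le_nhds <| (isOpen_lt hcont continuous_const).mem_nhds (by simpa using hpos)
  obtain ⟨ε, hεK, hεsmall, hε⟩ := (hK.and (hsmall.and self_mem_nhdsWithin)).exists
  have hexpand : ∑ i, (v i - (u + ε • h) i) ^ 2
      = ∑ i, (v i - u i) ^ 2 - ε * (2 * ((v - u) ⬝ᵥ h) - ε * (h ⬝ᵥ h)) := by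
    simp only [dotProduct, Finset.mul_sum, ← Finset.sum_sub_distrib]
    refine Finset.sum_congr rfl fun i _ => ?_
    simp only [Pi.add_apply, Pi.smul_apply, Pi.sub_apply, smul_eq_mul]
    ring
  have hle : ∑ i, (v i - u i) ^ 2 ≤ ∑ i, (v i - (u + ε • h) i) ^ 2 := hmin hεK
  have hgain : 0 < ε * (2 * ((v - u) ⬝ᵥ h) - ε * (h ⬝ᵥ h)) :=
    mul_pos (Set.mem_Ioi.mp hε) (sub_pos.mpr hεsmall)
  linarith

end Projection

section Isotonic

variable {ι : Type*} [Fintype ι]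

theorem Monotone.eventually_monotone_add_smul [Preorder ι] {u : ι → ℝ} (hu : Monotone u)
    (h : ι → ℝ) (hh : ∀ i j, i ≤ j → u i < u j ∨ h i = h j) :
    ∀ᶠ ε in 𝓝 (0 : ℝ), Monotone (u + ε • h) := by
  have hpair : ∀ i j, ∀ᶠ ε in 𝓝 (0 : ℝ), i ≤ j → (u + ε • h) i ≤ (u + ε • h) j := by
    intro i j
    by_cases hij : i ≤ j
    · rcases hh i j hij with hlt | heq
      · have hopen : IsOpen {ε : ℝ | (u + ε • h) i < (u + ε • h) j} :=
          isOpen_lt (by fun_prop) (by fun_prop)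
        filter_upwards [hopen.mem_nhds (by simpa using hlt)] with ε hε _ using hε.le
      · exact Eventually.of_forall fun ε _ => by simpa [heq] using hu hij
    · exact Eventually.of_forall fun _ hij' => absurd hij' hij
  filter_upwards [eventually_all.2 fun i => eventually_all.2 (hpair i)] with ε hε i j hij
    using hε i j hij

variable [Preorder ι] {u v : ι → ℝ} (hu : Monotone u)
  (hmin : IsMinOn (fun w => ∑ i, (v i - w i) ^ 2) {w | Monotone w} u)
include hu hmin

theorem dotProduct_sub_nonpos_of_monotone {w : ι → ℝ} (hw : Monotone w) :
    (v - u) ⬝ᵥ w ≤ 0 :=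
  dotProduct_sub_nonpos_of_isMinOn hmin <| eventually_nhdsWithin_of_forall fun _ hε =>
    hu.add (hw.const_smul (Set.mem_Ioi.mp hε).le :)

theorem dotProduct_sub_comp_eq_zero (φ : ℝ → ℝ) : (v - u) ⬝ᵥ (φ ∘ u) = 0 := by
  have hnonpos : ∀ φ : ℝ → ℝ, (v - u) ⬝ᵥ (φ ∘ u) ≤ 0 := fun φ =>
    dotProduct_sub_nonpos_of_isMinOn hmin <| nhdsWithin_le_nhds <|
      hu.eventually_monotone_add_smul (φ ∘ u) fun i j hij =>
        (hu hij).lt_or_eq.imp_right (congrArg φ)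
  have hneg : (v - u) ⬝ᵥ ((-φ) ∘ u) = -((v - u) ⬝ᵥ (φ ∘ u)) := by
    rw [← dotProduct_neg]; rfl
  linarith [hnonpos φ, hnonpos (-φ)]

end Isotonic

theorem dotProduct_sub_neg_of_strictMono {ι : Type*} [Fintype ι] [PartialOrder ι]
    {u v : ι → ℝ} (hu : Monotone u)
    (hmin : IsMinOn (fun w => ∑ i, (v i - w i) ^ 2) {w | Monotone w} u)
    {τ : ι → ℝ} (hτ : StrictMono τ) (huv : u ≠ v) : (v - u) ⬝ᵥ τ < 0 := by
  have hd : 0 < (v - u) ⬝ᵥ (v - u) :=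
    lt_of_le_of_ne (Finset.sum_nonneg fun i _ => mul_self_nonneg _)
      (Ne.symm (dotProduct_self_eq_zero.not.mpr (sub_ne_zero.mpr huv.symm)))
  have hmono : ∀ᶠ ε in 𝓝[>] (0 : ℝ), Monotone (τ + ε • (v - u)) :=
    nhdsWithin_le_nhds <| hτ.monotone.eventually_monotone_add_smul (v - u) fun i j hij =>
      hij.lt_or_eq.imp (fun h => hτ h) (congrArg (v - u))
  obtain ⟨ε, hεmono, hε⟩ := (hmono.and self_mem_nhdsWithin).exists
  have hle := dotProduct_sub_nonpos_of_monotone hu hmin hεmono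
  rw [dotProduct_add, dotProduct_smul, smul_eq_mul] at hle
  nlinarith

theorem pinball_isotonicProj_lt_general (m : ℕ) (τ : Fin m → ℝ)
    (hτmono : StrictMono τ)
    (v u : Fin m → ℝ) (hu : Monotone u)
    (hproj : ∀ w : Fin m → ℝ, Monotone w →
      Real.sqrt (∑ i, (v i - u i) ^ 2) ≤ Real.sqrt (∑ i, (v i - w i) ^ 2))
    (huv : u ≠ v) (y : ℝ) :
    ∑ i, pinball (τ i) (y - u i) < ∑ i, pinball (τ i) (y - v i) := by
  have hmin : IsMinOn (fun w => ∑ i, (v i - w i) ^ 2) {w | Monotone w} u :=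
    fun w hw => (Real.sqrt_le_sqrt_iff (by positivity)).mp (hproj w hw)
  let below : ℝ → ℝ := fun t => if y < t then 1 else 0
  have hgain : 0 < (v - u) ⬝ᵥ (below ∘ u - τ) := by
    rw [dotProduct_sub, dotProduct_sub_comp_eq_zero hu hmin below]
    linarith [dotProduct_sub_neg_of_strictMono hu hmin hτmono huv]
  have hsubgrad : (v - u) ⬝ᵥ (below ∘ u - τ)
      ≤ ∑ i, pinball (τ i) (y - v i) - ∑ i, pinball (τ i) (y - u i) := by
    rw [← Finset.sum_sub_distrib]
    exact Finset.sum_le_sum fun i _ => le_pinball_sub_pinball (τ i) (u i) (v i) y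
  linarith

/-- If the quantile levels are strictly increasing and the isotonic projection `u` of `v`
is not `v` itself, then isotonic projection strictly improves the total pinball loss. -/
theorem pinball_isotonicProj_lt (m : ℕ) (hm : 1 ≤ m) (τ : Fin m → ℝ)
    (hτmono : StrictMono τ) (hτ0 : ∀ i, 0 ≤ τ i) (hτ1 : ∀ i, τ i ≤ 1)
    (v u : Fin m → ℝ) (hu : Monotone u)
    (hproj : ∀ w : Fin m → ℝ, Monotone w →
      Real.sqrt (∑ i, (v i - u i) ^ 2) ≤ Real.sqrt (∑ i, (v i - w i) ^ 2))
    (huv : u ≠ v) (y : ℝ) :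
    ∑ i, pinball (τ i) (y - u i) < ∑ i, pinball (τ i) (y - v i) :=
  pinball_isotonicProj_lt_general m τ hτmono v u hu hproj huv y
end
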